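/- Let G be a group such that ℤ[G] has no nonzero zero divisors, and let f, g ∈ ℤ[G] be nonzero. Then the Newton polytope of the product satisfies P(f·g) = P(f) + P(g), where P(h) ⊆ H₁(G;ℝ) is the convex hull of the images under the abelianization map ε : G → H₁(G;ℝ) of the group elements with nonzero coefficient in h, and + denotes Minkowski sum. -/

import Mathlib

/-!
Since `supp (f * g) ⊆ supp f * supp g` and `ε` is a homomorphism, `P(fg) ⊆ P(f) + P(g)`.
Conversely, a point of `P(f) + P(g)` outside the polytope `P(fg)` would be separated from it by
a linear functional `φ`. The parts of `f` and `g` on which `φ ∘ ε` is maximal are nonzero, so their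
product is nonzero, and it is exactly the part of `fg` of the sum of the two maximal weights.
Hence `max φ` on `P(fg)` is `max φ` on `P(f)` plus `max φ` on `P(g)`, a contradiction.
Separation needs no topology on `H₁(G;ℝ)`: it takes place in the finite-dimensional span of the
points involved.
-/

open scoped TensorProduct Pointwise

/-- The first real homology `H₁(G;ℝ) = ℝ ⊗_ℤ G^{ab}` of a group `G`. -/
abbrev GroupH1 (G : Type*) [Group G] := ℝ ⊗[ℤ] (Additive (Abelianization G))

/-- The canonical map `ε : G → H₁(G;ℝ)`. -/
noncomputable def epsH1 (G : Type*) [Group G] (g : G) : GroupH1 G :=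
  (1 : ℝ) ⊗ₜ[ℤ] (Additive.ofMul (Abelianization.of g))

/-- The Newton polytope `P(f) ⊆ H₁(G;ℝ)` of `f ∈ ℤ[G]`: the convex hull of the
images under `ε` of the group elements with nonzero coefficient in `f`. -/
noncomputable def newtonPolytope {G : Type*} [Group G] (f : MonoidAlgebra ℤ G) :
    Set (GroupH1 G) :=
  convexHull ℝ (epsH1 G '' {g : G | f.coeff g ≠ 0})

theorem Submodule.exists_linearMap_injOn {K V : Type*} [Field K] [AddCommGroup V] [Module K V]
    (W : Submodule K V) [FiniteDimensional K W] :
    ∃ ρ : V →ₗ[K] (Fin (Module.finrank K W) → K), Set.InjOn ρ W := by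
  obtain ⟨π, hπ⟩ := W.subtype.exists_leftInverse_of_injective W.ker_subtype
  refine ⟨(Module.finBasis K W).equivFun.toLinearMap ∘ₗ π, fun v hv u hu hvu => ?_⟩
  have hπv : π v = ⟨v, hv⟩ := LinearMap.congr_fun hπ ⟨v, hv⟩
  have hπu : π u = ⟨u, hu⟩ := LinearMap.congr_fun hπ ⟨u, hu⟩
  simpa [hπv, hπu] using hvu

theorem exists_linearMap_lt_of_notMem_convexHull {V : Type*} [AddCommGroup V] [Module ℝ V]
    {S : Set V} (hS : S.Finite) {x : V} (hx : x ∉ convexHull ℝ S) :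
    ∃ φ : V →ₗ[ℝ] ℝ, ∀ s ∈ S, φ s < φ x := by
  set W := Submodule.span ℝ (insert x S)
  have : FiniteDimensional ℝ W := FiniteDimensional.span_of_finite ℝ (hS.insert x)
  obtain ⟨ρ, hρ⟩ := W.exists_linearMap_injOn
  have hxW : x ∈ W := Submodule.subset_span (Set.mem_insert x S)
  have hSW : convexHull ℝ S ⊆ W :=
    convexHull_min ((Set.subset_insert x S).trans Submodule.subset_span) W.convex
  have hρx : ρ x ∉ convexHull ℝ (ρ '' S) := by
    rw [← ρ.image_convexHull]
    rintro ⟨y, hy, hyx⟩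
    exact hx (hρ (hSW hy) hxW hyx ▸ hy)
  obtain ⟨ψ, u, hψS, hψx⟩ := geometric_hahn_banach_closed_point (convex_convexHull ℝ _)
    ((hS.image ρ).isClosed_convexHull (𝕜 := ℝ)) hρx
  exact ⟨ψ.toLinearMap ∘ₗ ρ, fun s hs =>
    (hψS _ (subset_convexHull ℝ _ ⟨s, hs, rfl⟩)).trans hψx⟩

namespace MonoidAlgebra

variable {R G : Type*} [Semiring R] (w : G → ℝ)

/-- For `w = φ ∘ ε` and `c` the maximum of `w` on the support, this is the part of `f` over the
face of `P(f)` exposed by `φ` (the paper's `f^v` when that face is a vertex `v`). -/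
noncomputable def weightComponent (c : ℝ) (f : R[G]) : R[G] :=
  ofCoeff (f.coeff.filter fun a => w a = c)

variable {w}

theorem mem_support_weightComponent {c : ℝ} {f : R[G]} {a : G} :
    a ∈ (weightComponent w c f).coeff.support ↔ a ∈ f.coeff.support ∧ w a = c := by
  simp [weightComponent, Finsupp.support_filter]

theorem exists_eq_weightComponent_add {c : ℝ} {f : R[G]} (hf : ∀ a ∈ f.coeff.support, w a ≤ c) :
    ∃ f₁ : R[G], f = weightComponent w c f + f₁ ∧ ∀ a ∈ f₁.coeff.support, w a < c := by
  refine ⟨ofCoeff (f.coeff.filter fun a => w a ≠ c),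
    coeff_inj.mp (Finsupp.filter_add_filter_not f.coeff _).symm, fun a ha => ?_⟩
  simp only [Finsupp.support_filter, Finset.mem_filter] at ha
  exact (hf a ha.1).lt_of_ne ha.2

variable [Mul G]

theorem coeff_mul_eq_zero_of_forall_add_lt (hw : ∀ a b, w (a * b) = w a + w b)
    {p q : R[G]} {z : G}
    (h : ∀ a ∈ p.coeff.support, ∀ b ∈ q.coeff.support, w a + w b < w z) :
    (p * q).coeff z = 0 := by
  classical
  by_contra hz
  obtain ⟨a, ha, b, hb, rfl⟩ :=
    Finset.mem_mul.mp (support_coeff_mul_subset p q (Finsupp.mem_support_iff.mpr hz))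
  exact (h a ha b hb).ne (hw a b).symm

theorem coeff_mul_eq_coeff_mul_weightComponent (hw : ∀ a b, w (a * b) = w a + w b)
    {f g : R[G]} {M N : ℝ} (hf : ∀ a ∈ f.coeff.support, w a ≤ M)
    (hg : ∀ b ∈ g.coeff.support, w b ≤ N) {z : G} (hz : w z = M + N) :
    (f * g).coeff z = (weightComponent w M f * weightComponent w N g).coeff z := by
  obtain ⟨f₁, hf_eq, hf₁⟩ := exists_eq_weightComponent_add hf
  obtain ⟨g₁, hg_eq, hg₁⟩ := exists_eq_weightComponent_add hg
  have h₁ : (weightComponent w M f * g₁).coeff z = 0 :=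
    coeff_mul_eq_zero_of_forall_add_lt hw fun a ha b hb => by
      linarith [(mem_support_weightComponent.mp ha).2, hg₁ b hb]
  have h₂ : (f₁ * g).coeff z = 0 :=
    coeff_mul_eq_zero_of_forall_add_lt hw fun a ha b hb => by linarith [hf₁ a ha, hg b hb]
  have hsplit : f * g = weightComponent w M f * weightComponent w N g +
      (weightComponent w M f * g₁ + f₁ * g) :=
    calc f * g = (weightComponent w M f + f₁) * g := by rw [← hf_eq]
      _ = weightComponent w M f * (weightComponent w N g + g₁) + f₁ * g := by
        rw [add_mul, ← hg_eq]
      _ = _ := by rw [mul_add, add_assoc]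
  rw [hsplit, coeff_add, coeff_add, Finsupp.add_apply, Finsupp.add_apply, h₁, h₂, add_zero,
    add_zero]

theorem exists_mem_support_mul_forall_add_le [NoZeroDivisors R[G]]
    (hw : ∀ a b, w (a * b) = w a + w b) {f g : R[G]} (hf : f ≠ 0) (hg : g ≠ 0) :
    ∃ z ∈ (f * g).coeff.support,
      ∀ a ∈ f.coeff.support, ∀ b ∈ g.coeff.support, w a + w b ≤ w z := by
  classical
  obtain ⟨a₀, ha₀, hf_max⟩ := f.coeff.support.exists_max_image w
    (Finsupp.support_nonempty_iff.mpr (coeff_eq_zero.not.mpr hf))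
  obtain ⟨b₀, hb₀, hg_max⟩ := g.coeff.support.exists_max_image w
    (Finsupp.support_nonempty_iff.mpr (coeff_eq_zero.not.mpr hg))
  have hF : weightComponent w (w a₀) f ≠ 0 := fun h => by
    simpa [h] using (mem_support_weightComponent (w := w)).mpr ⟨ha₀, rfl⟩
  have hG : weightComponent w (w b₀) g ≠ 0 := fun h => by
    simpa [h] using (mem_support_weightComponent (w := w)).mpr ⟨hb₀, rfl⟩
  obtain ⟨z, hz⟩ := Finsupp.support_nonempty_iff.mpr (coeff_eq_zero.not.mpr (mul_ne_zero hF hG))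
  obtain ⟨a, ha, b, hb, rfl⟩ := Finset.mem_mul.mp (support_coeff_mul_subset _ _ hz)
  have hwz : w (a * b) = w a₀ + w b₀ := by
    rw [hw, (mem_support_weightComponent.mp ha).2, (mem_support_weightComponent.mp hb).2]
  refine ⟨a * b, ?_, fun a' ha' b' hb' => hwz ▸ add_le_add (hf_max a' ha') (hg_max b' hb')⟩
  rw [Finsupp.mem_support_iff, coeff_mul_eq_coeff_mul_weightComponent hw hf_max hg_max hwz]
  exact Finsupp.mem_support_iff.mp hz

end MonoidAlgebra

theorem epsH1_mul {G : Type*} [Group G] (a b : G) :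
    epsH1 G (a * b) = epsH1 G a + epsH1 G b := by
  simp [epsH1, TensorProduct.tmul_add]

theorem newtonPolytope_mul_subset {G : Type*} [Group G] (f g : MonoidAlgebra ℤ G) :
    newtonPolytope (f * g) ⊆ newtonPolytope f + newtonPolytope g := by
  classical
  rw [newtonPolytope, newtonPolytope, newtonPolytope, ← convexHull_add]
  refine convexHull_mono ?_
  rintro _ ⟨z, hz, rfl⟩
  obtain ⟨a, ha, b, hb, rfl⟩ := Finset.mem_mul.mp
    (MonoidAlgebra.support_coeff_mul_subset f g (Finsupp.mem_support_iff.mpr hz))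
  rw [epsH1_mul]
  exact Set.add_mem_add ⟨a, Finsupp.mem_support_iff.mp ha, rfl⟩
    ⟨b, Finsupp.mem_support_iff.mp hb, rfl⟩

theorem newtonPolytope_mul_general {G : Type*} [Group G]
    [NoZeroDivisors (MonoidAlgebra ℤ G)]
    (f g : MonoidAlgebra ℤ G) :
    newtonPolytope (f * g) = newtonPolytope f + newtonPolytope g := by
  refine (newtonPolytope_mul_subset f g).antisymm fun x hx => ?_
  by_contra hx_notMem
  obtain ⟨φ, hφ⟩ := exists_linearMap_lt_of_notMem_convexHull
    (Set.Finite.image (epsH1 G) (f * g).coeff.hasFiniteSupport) hx_notMem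
  obtain ⟨p, hp, q, hq, rfl⟩ := hx
  obtain ⟨_, ⟨a, ha, rfl⟩, hφp⟩ :=
    (φ.convexOn convex_univ).exists_ge_of_mem_convexHull (Set.subset_univ _) hp
  obtain ⟨_, ⟨b, hb, rfl⟩, hφq⟩ :=
    (φ.convexOn convex_univ).exists_ge_of_mem_convexHull (Set.subset_univ _) hq
  obtain ⟨z, hz, hz_max⟩ := MonoidAlgebra.exists_mem_support_mul_forall_add_le
    (w := φ ∘ epsH1 G) (fun a b => by simp [epsH1_mul])
    (fun h : f = 0 => ha (by simp [h])) (fun h : g = 0 => hb (by simp [h]))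
  have hφz := hφ _ ⟨z, Finsupp.mem_support_iff.mp hz, rfl⟩
  have hz_ge := hz_max a (Finsupp.mem_support_iff.mpr ha) b (Finsupp.mem_support_iff.mpr hb)
  simp only [Function.comp_apply, map_add] at hz_ge hφz
  linarith

/-- If `ℤ[G]` has no nonzero zero divisors, then the Newton polytope is
multiplicative: `P(f·g) = P(f) + P(g)` (Minkowski sum) for nonzero `f, g ∈ ℤ[G]`. -/
theorem newtonPolytope_mul {G : Type*} [Group G]
    [NoZeroDivisors (MonoidAlgebra ℤ G)]
    (f g : MonoidAlgebra ℤ G) (hf : f ≠ 0) (hg : g ≠ 0) :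
    newtonPolytope (f * g) = newtonPolytope f + newtonPolytope g :=
  newtonPolytope_mul_general f g
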